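/- With φ_{q,ℓ} as defined below, set d'_𝓕 = −4π Σ_{α=1}^{p} Σ_{μ=p+1}^{p+q} (∂_α ∂_μ ⊗ A(ω_{α,μ}) ⊗ 1) and d''_𝓕 = (1/(4π)) Σ_{α=1}^{p} Σ_{μ=p+1}^{p+q} (z_α· z_μ· ⊗ A(ω_{α,μ}) ⊗ 1), acting on P ⊗ E ⊗ T^ℓ. Then d'_𝓕 φ_{q,ℓ} = 0 and d''_𝓕 φ_{q,ℓ} = 0. -/
import Mathlib


open scoped TensorProduct
open Finset

noncomputable section

namespace FockModel

/-- The polynomial algebra `ℂ[z_1, …, z_{p+q}]` (Fock model, `n = 1`). -/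
abbrev P (p q : ℕ) := MvPolynomial (Fin (p + q)) ℂ

/-- The vector space with basis `{ω_{α,μ}}` indexed by pairs of a positive and a
negative index. -/
abbrev Om (p q : ℕ) := (Fin p × Fin q) → ℂ

/-- The exterior algebra on the `ω_{α,μ}`. -/
abbrev E (p q : ℕ) := ExteriorAlgebra ℂ (Om p q)

/-- `ℂ^{p+q}`. -/
abbrev Vc (p q : ℕ) := Fin (p + q) → ℂ

/-- The `ℓ`-fold tensor power `T^ℓ = (ℂ^{p+q})^{⊗ℓ}`. -/
abbrev T (p q ℓ : ℕ) := ⨂[ℂ] (_ : Fin ℓ), Vc p q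

/-- The ambient space `P ⊗ E ⊗ T^ℓ`. -/
abbrev F (p q ℓ : ℕ) := (P p q ⊗[ℂ] E p q) ⊗[ℂ] T p q ℓ

/-- The standard basis vector `e_i` of `ℂ^{p+q}`. -/
def e (p q : ℕ) (i : Fin (p + q)) : Vc p q := Pi.single i 1

/-- The basis vector `ω_{α,μ}` of the exterior algebra. -/
def ω (p q : ℕ) (α : Fin p) (μ : Fin q) : E p q :=
  ExteriorAlgebra.ι ℂ (Pi.single (α, μ) 1)

/-- The Schwartz form `φ_{q,ℓ}` in the Fock model. -/
def phi (p q ℓ : ℕ) : F p q ℓ :=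
  ((2 : ℂ) ^ ((q : ℂ) / 2) * (-Complex.I / (4 * (Real.pi : ℂ))) ^ (q + ℓ)) •
    ∑ a : Fin q → Fin p, ∑ b : Fin ℓ → Fin p,
      (((∏ k : Fin q, MvPolynomial.X (Fin.castAdd q (a k)) : P p q) *
          ∏ k : Fin ℓ, MvPolynomial.X (Fin.castAdd q (b k)))
        ⊗ₜ[ℂ] (List.ofFn fun μ : Fin q => ω p q (a μ) μ).prod)
      ⊗ₜ[ℂ] PiTensorProduct.tprod ℂ fun k : Fin ℓ => e p q (Fin.castAdd q (b k))

/-- `d'_𝓕 = −4π Σ_{α,μ} (∂_α ∂_μ ⊗ A(ω_{α,μ}) ⊗ 1)`. -/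
def dF' (p q ℓ : ℕ) : F p q ℓ →ₗ[ℂ] F p q ℓ :=
  (-(4 * (Real.pi : ℂ))) •
    ∑ α : Fin p, ∑ μ : Fin q,
      TensorProduct.map
        (TensorProduct.map
          ((MvPolynomial.pderiv (Fin.castAdd q α)).toLinearMap ∘ₗ
            (MvPolynomial.pderiv (Fin.natAdd p μ)).toLinearMap)
          (LinearMap.mulLeft ℂ (ω p q α μ)))
        LinearMap.id

/-- `d''_𝓕 = (1/(4π)) Σ_{α,μ} (z_α· z_μ· ⊗ A(ω_{α,μ}) ⊗ 1)`. -/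
def dF'' (p q ℓ : ℕ) : F p q ℓ →ₗ[ℂ] F p q ℓ :=
  (1 / (4 * (Real.pi : ℂ))) •
    ∑ α : Fin p, ∑ μ : Fin q,
      TensorProduct.map
        (TensorProduct.map
          (LinearMap.mulLeft ℂ (MvPolynomial.X (Fin.castAdd q α) : P p q) ∘ₗ
            LinearMap.mulLeft ℂ (MvPolynomial.X (Fin.natAdd p μ) : P p q))
          (LinearMap.mulLeft ℂ (ω p q α μ)))
        LinearMap.id

/- ### auxiliary lemmas -/

lemma pderiv_prod_zero {σ ι : Type*} [DecidableEq σ] (i : σ) (s : Finset ι)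
    (f : ι → MvPolynomial σ ℂ) (h : ∀ k ∈ s, MvPolynomial.pderiv i (f k) = 0) :
    MvPolynomial.pderiv i (∏ k ∈ s, f k) = 0 := by
  classical
  induction s using Finset.induction_on with
  | empty => simp
  | @insert x s hx ih =>
    rw [Finset.prod_insert hx, Derivation.leibniz]
    rw [h _ (Finset.mem_insert_self _ _), ih (fun k hk => h k (Finset.mem_insert_of_mem hk))]
    simp

lemma natAdd_ne_castAdd (p q : ℕ) (μ : Fin q) (β : Fin p) :
    Fin.natAdd p μ ≠ Fin.castAdd q β := by
  simp [Fin.ext_iff]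
  omega

lemma pderiv_natAdd_poly (p q ℓ : ℕ) (μ : Fin q) (a : Fin q → Fin p) (b : Fin ℓ → Fin p) :
    MvPolynomial.pderiv (Fin.natAdd p μ)
      ((∏ k : Fin q, MvPolynomial.X (Fin.castAdd q (a k)) : P p q) *
        ∏ k : Fin ℓ, MvPolynomial.X (Fin.castAdd q (b k))) = 0 := by
  rw [Derivation.leibniz]
  rw [pderiv_prod_zero, pderiv_prod_zero] <;>
    simp [MvPolynomial.pderiv_X, natAdd_ne_castAdd, Pi.single_apply]

lemma key_wedge (p q : ℕ) (μ : Fin q) (α : Fin p) (a : Fin q → Fin p) :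
    ω p q α μ * (List.ofFn fun k : Fin q => ω p q (a k) k).prod
      + ω p q (a μ) μ *
        (List.ofFn fun k : Fin q => ω p q (Function.update a μ α k) k).prod = 0 := by
  classical
  set v : Fin (q + 1) → Om p q :=
    Fin.cons (Pi.single (α, μ) 1) (fun k => Pi.single (a k, k) 1) with hv
  have h1 : ω p q α μ * (List.ofFn fun k : Fin q => ω p q (a k) k).prod
      = ExteriorAlgebra.ιMulti ℂ (q + 1) v := by
    rw [ExteriorAlgebra.ιMulti_apply, List.ofFn_succ]
    simp [hv, ω, List.prod_cons]
  have h2 : v ∘ Equiv.swap 0 μ.succ =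
      Fin.cons (Pi.single (a μ, μ) 1)
        (fun k => Pi.single (Function.update a μ α k, k) 1) := by
    funext k
    refine Fin.cases ?_ ?_ k
    · simp [hv, Equiv.swap_apply_left]
    · intro j
      by_cases hj : j = μ
      · subst hj
        simp [hv, Equiv.swap_apply_right]
      · have : Equiv.swap (0 : Fin (q+1)) μ.succ j.succ = j.succ := by
          apply Equiv.swap_apply_of_ne_of_ne
          · exact Fin.succ_ne_zero j
          · simpa [Fin.succ_inj] using hj
        simp [this, hv, Function.update_of_ne hj]
  have h3 : ω p q (a μ) μ *
      (List.ofFn fun k : Fin q => ω p q (Function.update a μ α k) k).prod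
      = ExteriorAlgebra.ιMulti ℂ (q + 1) (v ∘ Equiv.swap 0 μ.succ) := by
    rw [h2, ExteriorAlgebra.ιMulti_apply, List.ofFn_succ]
    simp [ω, List.prod_cons]
  rw [h1, h3, AlternatingMap.map_swap _ _ (Ne.symm (Fin.succ_ne_zero μ))]
  exact add_neg_cancel _

lemma key_poly (p q : ℕ) (μ : Fin q) (α : Fin p) (a : Fin q → Fin p) :
    (MvPolynomial.X (Fin.castAdd q α) : P p q) *
      ∏ k : Fin q, MvPolynomial.X (Fin.castAdd q (a k))
    = MvPolynomial.X (Fin.castAdd q (a μ)) *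
      ∏ k : Fin q, MvPolynomial.X (Fin.castAdd q (Function.update a μ α k)) := by
  classical
  have h : (fun k : Fin q => (MvPolynomial.X (Fin.castAdd q (Function.update a μ α k)) : P p q))
      = Function.update (fun k => (MvPolynomial.X (Fin.castAdd q (a k)) : P p q)) μ
          (MvPolynomial.X (Fin.castAdd q α)) := by
    funext k
    by_cases hk : k = μ
    · subst hk; simp
    · simp [Function.update_of_ne hk]
  rw [h, Finset.prod_update_of_mem (Finset.mem_univ μ),
    ← Finset.prod_erase_mul Finset.univ _ (Finset.mem_univ μ),
    Finset.sdiff_singleton_eq_erase]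
  ring

lemma triple_sum_zero {A B C M : Type*} [Fintype A] [Fintype B] [Fintype C]
    [AddCommMonoid M] (G : A → B → C → M) (h : ∀ c : C, ∑ x : A × B, G x.1 x.2 c = 0) :
    ∑ a : A, ∑ b : B, ∑ c : C, G a b c = 0 := by
  have h1 : ∑ a : A, ∑ b : B, ∑ c : C, G a b c = ∑ x : A × B, ∑ c : C, G x.1 x.2 c := by
    rw [Fintype.sum_prod_type]
  rw [h1, Finset.sum_comm]
  simp [h]

lemma wedge_diag_zero (p q : ℕ) (μ : Fin q) (a : Fin q → Fin p) :
    ω p q (a μ) μ * (List.ofFn fun k : Fin q => ω p q (a k) k).prod = 0 := by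
  classical
  set v : Fin (q + 1) → Om p q :=
    Fin.cons (Pi.single (a μ, μ) 1) (fun k => Pi.single (a k, k) 1) with hv
  have h1 : ω p q (a μ) μ * (List.ofFn fun k : Fin q => ω p q (a k) k).prod
      = ExteriorAlgebra.ιMulti ℂ (q + 1) v := by
    rw [ExteriorAlgebra.ιMulti_apply, List.ofFn_succ]
    simp [hv, ω, List.prod_cons]
  rw [h1]
  exact AlternatingMap.map_eq_zero_of_eq _ v (by simp [hv]) (Ne.symm (Fin.succ_ne_zero μ))

/-- The summand appearing in `dF'' (phi)`. -/
def body (p q ℓ : ℕ) (μ : Fin q) (bf : Fin ℓ → Fin p) (x : (Fin q → Fin p) × Fin p) :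
    F p q ℓ :=
  ((MvPolynomial.X (Fin.castAdd q x.2) *
      (MvPolynomial.X (Fin.natAdd p μ) *
        ((∏ k : Fin q, MvPolynomial.X (Fin.castAdd q (x.1 k))) *
          ∏ k : Fin ℓ, MvPolynomial.X (Fin.castAdd q (bf k)))))
    ⊗ₜ[ℂ] (ω p q x.2 μ * (List.ofFn fun ν : Fin q => ω p q (x.1 ν) ν).prod))
  ⊗ₜ[ℂ] PiTensorProduct.tprod ℂ fun k : Fin ℓ => e p q (Fin.castAdd q (bf k))

lemma body_pair_cancel (p q ℓ : ℕ) (μ : Fin q) (bf : Fin ℓ → Fin p)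
    (x : (Fin q → Fin p) × Fin p) :
    body p q ℓ μ bf x + body p q ℓ μ bf (Function.update x.1 μ x.2, x.1 μ) = 0 := by
  obtain ⟨a, α⟩ := x
  have hP : (MvPolynomial.X (Fin.castAdd q α) : P p q) *
        (MvPolynomial.X (Fin.natAdd p μ) *
          ((∏ k : Fin q, MvPolynomial.X (Fin.castAdd q (a k))) *
            ∏ k : Fin ℓ, MvPolynomial.X (Fin.castAdd q (bf k))))
      = MvPolynomial.X (Fin.castAdd q (a μ)) *
        (MvPolynomial.X (Fin.natAdd p μ) *
          ((∏ k : Fin q, MvPolynomial.X (Fin.castAdd q (Function.update a μ α k))) *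
            ∏ k : Fin ℓ, MvPolynomial.X (Fin.castAdd q (bf k)))) := by
    have hk := key_poly p q μ α a
    calc (MvPolynomial.X (Fin.castAdd q α) : P p q) *
          (MvPolynomial.X (Fin.natAdd p μ) *
            ((∏ k : Fin q, MvPolynomial.X (Fin.castAdd q (a k))) *
              ∏ k : Fin ℓ, MvPolynomial.X (Fin.castAdd q (bf k))))
        = (MvPolynomial.X (Fin.castAdd q α) *
            ∏ k : Fin q, MvPolynomial.X (Fin.castAdd q (a k))) *
          (MvPolynomial.X (Fin.natAdd p μ) *
            ∏ k : Fin ℓ, MvPolynomial.X (Fin.castAdd q (bf k))) := by ring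
      _ = (MvPolynomial.X (Fin.castAdd q (a μ)) *
            ∏ k : Fin q, MvPolynomial.X (Fin.castAdd q (Function.update a μ α k))) *
          (MvPolynomial.X (Fin.natAdd p μ) *
            ∏ k : Fin ℓ, MvPolynomial.X (Fin.castAdd q (bf k))) := by rw [hk]
      _ = _ := by ring
  simp only [body]
  rw [hP, ← TensorProduct.add_tmul, ← TensorProduct.tmul_add, key_wedge,
    TensorProduct.tmul_zero, TensorProduct.zero_tmul]

lemma body_diag_zero (p q ℓ : ℕ) (μ : Fin q) (bf : Fin ℓ → Fin p)
    (x : (Fin q → Fin p) × Fin p) (hx : x.1 μ = x.2) :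
    body p q ℓ μ bf x = 0 := by
  obtain ⟨a, α⟩ := x
  simp only at hx
  subst hx
  simp only [body]
  rw [wedge_diag_zero, TensorProduct.tmul_zero, TensorProduct.zero_tmul]

/-- **Closedness (Theorem 6.3, first two assertions):**
`d'_𝓕 φ_{q,ℓ} = 0` and `d''_𝓕 φ_{q,ℓ} = 0`. -/
theorem dF_phi_eq_zero (p q ℓ : ℕ) (hp : 1 ≤ p) (hq : 1 ≤ q) :
    dF' p q ℓ (phi p q ℓ) = 0 ∧ dF'' p q ℓ (phi p q ℓ) = 0 := by
  classical
  constructor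
  · rw [dF', LinearMap.smul_apply, phi, map_smul]
    simp only [LinearMap.sum_apply, map_sum, TensorProduct.map_tmul, LinearMap.comp_apply,
      Derivation.coeFn_coe, pderiv_natAdd_poly, map_zero, TensorProduct.zero_tmul,
      Finset.sum_const_zero, smul_zero]
  · rw [dF'', LinearMap.smul_apply, phi, map_smul]
    simp only [LinearMap.sum_apply, map_sum, TensorProduct.map_tmul, LinearMap.comp_apply,
      LinearMap.mulLeft_apply, LinearMap.id_coe, id_eq]
    refine smul_eq_zero_of_right _ (smul_eq_zero_of_right _ ?_)
    rw [Finset.sum_comm]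
    refine Finset.sum_eq_zero fun bf _ => ?_
    refine triple_sum_zero _ fun μ => ?_
    have hb : ∀ x : (Fin q → Fin p) × Fin p,
        ((MvPolynomial.X (Fin.castAdd q x.2) *
            (MvPolynomial.X (Fin.natAdd p μ) *
              ((∏ k : Fin q, MvPolynomial.X (Fin.castAdd q (x.1 k))) *
                ∏ k : Fin ℓ, MvPolynomial.X (Fin.castAdd q (bf k)))))
          ⊗ₜ[ℂ] (ω p q x.2 μ * (List.ofFn fun ν : Fin q => ω p q (x.1 ν) ν).prod))
        ⊗ₜ[ℂ] (PiTensorProduct.tprod ℂ fun k : Fin ℓ => e p q (Fin.castAdd q (bf k)))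
        = body p q ℓ μ bf x := fun x => rfl
    simp only [hb]
    refine Finset.sum_involution
      (fun x _ => (Function.update x.1 μ x.2, x.1 μ))
      (fun x _ => body_pair_cancel p q ℓ μ bf x)
      (fun x _ hne heq => ?_)
      (fun _ _ => Finset.mem_univ _)
      (fun x _ => ?_)
    · exact hne (body_diag_zero p q ℓ μ bf x (congrArg Prod.snd heq))
    · simp only
      rw [Function.update_self, Function.update_idem, Function.update_eq_self]

end FockModel
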